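/- arXiv:1910.08311 — 6 statements merged into one kernel-verified Lean document; each statement's English description precedes it below -/
import Mathlib

section
/- For every real number α with 1 < α ≤ 2: c^α_0 > 0, c^α_s = c^α_{−s} for all s ∈ ℤ, and c^α_s ≤ 0 for all s ∈ ℤ with s ≠ 0. -/
/-- Fractional centered-difference coefficients
`c^α_s = (-1)^s Γ(α+1) / (Γ(α/2 − s + 1) · Γ(α/2 + s + 1))`.
(In Lean, division by zero is zero, matching the stated convention.) -/
noncomputable def cCoef (α : ℝ) (s : ℤ) : ℝ :=
  ((-1 : ℝ) ^ s) * Real.Gamma (α + 1) /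
    (Real.Gamma (α / 2 - s + 1) * Real.Gamma (α / 2 + s + 1))

/-
For `0 < α < 2` the first Gamma factor `Γ(α/2 - n + 1)` of `c^α_n`, `n ≥ 1`, has its argument in
`(1 - n, 2 - n)`, where the sign of `Γ` is `(-1)^(n-1)`; this cancels the sign `(-1)^n` and leaves
`c^α_n < 0`. At `α = 2` that argument is the integer `2 - n`, a pole of `Γ` once `n ≥ 2`, so
`c^2_n = 0` for `n ≥ 2` while `c^2_1 = -1`. Symmetry in `s` is the swap of the two Gamma factors.
-/

open Real

theorem neg_one_pow_mul_Gamma_pos {n : ℕ} {x : ℝ} (h₁ : -n < x) (h₂ : x < -n + 1) :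
    0 < (-1) ^ n * Gamma x := by
  induction n generalizing x with
  | zero => simpa using Gamma_pos_of_pos (by simpa using h₁)
  | succ n ih =>
    push_cast at h₁ h₂
    have hx : x < 0 := by linarith [n.cast_nonneg (α := ℝ)]
    have hshift : 0 < (-1) ^ n * Gamma (x + 1) := ih (by linarith) (by linarith)
    rw [Gamma_add_one hx.ne] at hshift
    rw [pow_succ]
    nlinarith

theorem cCoef_neg (α : ℝ) (s : ℤ) : cCoef α (-s) = cCoef α s := by
  rw [cCoef, cCoef, zpow_neg, ← inv_zpow, inv_neg, inv_one, Int.cast_neg, mul_comm (Gamma _)]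
  ring_nf

theorem cCoef_zero_pos {α : ℝ} (hα : -1 < α) : 0 < cCoef α 0 := by
  have h₁ : 0 < Gamma (α + 1) := Gamma_pos_of_pos (by linarith)
  have h₂ : 0 < Gamma (α / 2 + 1) := Gamma_pos_of_pos (by linarith)
  simp only [cCoef, zpow_zero, one_mul, Int.cast_zero, sub_zero, add_zero]
  positivity

theorem cCoef_natCast_lt_zero {α : ℝ} (h₀ : 0 < α) (h₂ : α < 2) {n : ℕ} (hn : n ≠ 0) :
    cCoef α n < 0 := by
  obtain ⟨m, rfl⟩ := Nat.exists_eq_succ_of_ne_zero hn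
  have hsign : 0 < (-1) ^ m / Gamma (α / 2 - m) :=
    div_pos_iff.2 (mul_pos_iff.1 (neg_one_pow_mul_Gamma_pos (by linarith) (by linarith)))
  have hΓ₁ : 0 < Gamma (α + 1) := Gamma_pos_of_pos (by linarith)
  have hΓ₂ : 0 < Gamma (α / 2 + (m + 1 : ℕ) + 1) := Gamma_pos_of_pos (by positivity)
  have hcoef : cCoef α (m + 1 : ℕ) =
      -((-1) ^ m / Gamma (α / 2 - m)) * Gamma (α + 1) / Gamma (α / 2 + (m + 1 : ℕ) + 1) := by
    rw [cCoef, zpow_natCast, Int.cast_natCast, pow_succ,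
      show α / 2 - ((m + 1 : ℕ) : ℝ) + 1 = α / 2 - m by push_cast; ring]
    ring
  rw [hcoef]
  exact div_neg_of_neg_of_pos (mul_neg_of_neg_of_pos (neg_neg_of_pos hsign) hΓ₁) hΓ₂

theorem cCoef_two_natCast_nonpos {n : ℕ} (hn : n ≠ 0) : cCoef 2 n ≤ 0 := by
  rcases (Nat.one_le_iff_ne_zero.2 hn).eq_or_lt with rfl | hn₂
  · norm_num [cCoef]
  · have hpole : Gamma (2 / 2 - ((n : ℤ) : ℝ) + 1) = 0 := by
      rw [show (2 : ℝ) / 2 - ((n : ℤ) : ℝ) + 1 = -((n - 2 : ℕ) : ℝ) by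
        push_cast [Nat.cast_sub hn₂]; ring]
      exact Gamma_neg_nat_eq_zero _
    rw [cCoef, hpole, zero_mul, div_zero]

theorem cCoef_nonpos {α : ℝ} (h₀ : 0 < α) (h₂ : α ≤ 2) {s : ℤ} (hs : s ≠ 0) : cCoef α s ≤ 0 := by
  wlog hpos : 0 < s generalizing s
  · rw [← cCoef_neg]
    exact this (neg_ne_zero.2 hs) (by omega)
  lift s to ℕ using hpos.le
  rcases h₂.lt_or_eq with h₂ | rfl
  · exact (cCoef_natCast_lt_zero h₀ h₂ (by exact_mod_cast hs)).le
  · exact cCoef_two_natCast_nonpos (by exact_mod_cast hs)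

/-- For `1 < α ≤ 2`: `c^α_0 > 0`, `c^α_s = c^α_{-s}` for all `s ∈ ℤ`, and
`c^α_s ≤ 0` for all nonzero `s ∈ ℤ`. -/
theorem cCoef_sign_and_symm (α : ℝ) (hα₁ : 1 < α) (hα₂ : α ≤ 2) :
    0 < cCoef α 0 ∧
    (∀ s : ℤ, cCoef α s = cCoef α (-s)) ∧
    (∀ s : ℤ, s ≠ 0 → cCoef α s ≤ 0) :=
  ⟨cCoef_zero_pos (by linarith), fun s ↦ (cCoef_neg α s).symm,
    fun _ hs ↦ cCoef_nonpos (by linarith) hα₂ hs⟩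
end

section
/- (Discrete fractional Sobolev inequality.) Let 1 < α ≤ 2, let h_x, h_y > 0, and set R = [−π/h_x, π/h_x] × [−π/h_y, π/h_y]. Let F : ℝ² → ℂ be integrable on R and such that (k₁,k₂) ↦ (1 + |k₁|^α + |k₂|^α + 2|k₁ k₂|^α + |k₁|^{2α} + |k₂|^{2α}) |F(k₁,k₂)|² is integrable on R. Define the grid function V_{j,k} = (1/(2π)) ∫_R F(k₁,k₂) e^{i(k₁ j h_x + k₂ k h_y)} dk₁ dk₂ for j, k ∈ ℤ. Then for all j, k ∈ ℤ, |V_{j,k}| ≤ C_α · (∫_R (1 + |k₁|^α + |k₂|^α + 2|k₁ k₂|^α + |k₁|^{2α} + |k₂|^{2α}) |F(k₁,k₂)|² dk₁ dk₂)^{1/2}, where C_α = (1/(2π)) (∫_{ℝ²} dk₁ dk₂ / ((1+|k₁|^α)(1+|k₂|^α)))^{1/2} is finite and depends only on α, not on h_x or h_y. -/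
open MeasureTheory

/-!
By the triangle inequality `|V_{j,k}| ≤ (1/2π) ∫_R |F|`. Cauchy–Schwarz with the weight
`g(k) = (1 + |k₁|^α)(1 + |k₂|^α)` bounds `∫_R |F|` by `(∫_R 1/g)^{1/2} (∫_R g |F|²)^{1/2}`.
Expanding the product shows `g ≤ w`, and `1/g` is a product of two one-dimensional functions
that are integrable on `ℝ` because `α > 1`; enlarging `R` to `ℝ²` in `∫ 1/g` removes every
dependence on the mesh sizes.
-/

lemma one_add_rpow_le_two_rpow_mul {t α : ℝ} (ht : 0 ≤ t) (hα : 0 ≤ α) :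
    (1 + t) ^ α ≤ 2 ^ α * (1 + t ^ α) := by
  have h2 : (0 : ℝ) ≤ 2 ^ α := by positivity
  rcases le_total t 1 with h | h
  · calc (1 + t) ^ α ≤ 2 ^ α := Real.rpow_le_rpow (by positivity) (by linarith) hα
      _ ≤ 2 ^ α * (1 + t ^ α) := by nlinarith [Real.rpow_nonneg ht α]
  · calc (1 + t) ^ α ≤ (2 * t) ^ α := Real.rpow_le_rpow (by positivity) (by linarith) hα
      _ = 2 ^ α * t ^ α := Real.mul_rpow zero_le_two ht
      _ ≤ 2 ^ α * (1 + t ^ α) := by nlinarith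

lemma integrable_one_div_one_add_abs_rpow {α : ℝ} (hα : 1 < α) :
    Integrable (fun x : ℝ => 1 / (1 + |x| ^ α)) := by
  refine ((integrable_one_add_norm (by simpa using hα)).const_mul (2 ^ α)).mono'
    (by fun_prop : Measurable _).aestronglyMeasurable (ae_of_all _ fun x => ?_)
  have h1 : 0 < 1 + |x| := by positivity
  rw [Real.norm_eq_abs, Real.norm_eq_abs, abs_of_pos (by positivity), Real.rpow_neg h1.le,
    ← div_eq_mul_inv, div_le_div_iff₀ (by positivity) (by positivity), one_mul]
  exact one_add_rpow_le_two_rpow_mul (abs_nonneg x) (by linarith)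

lemma integrable_one_div_mul_one_add_abs_rpow {α : ℝ} (hα : 1 < α) :
    Integrable (fun p : ℝ × ℝ => 1 / ((1 + |p.1| ^ α) * (1 + |p.2| ^ α))) := by
  have h := integrable_one_div_one_add_abs_rpow hα
  rw [Measure.volume_eq_prod]
  simpa only [one_div_mul_one_div] using h.mul_prod h

lemma one_add_abs_rpow_mul_one_add_abs_rpow_le (a b α : ℝ) :
    (1 + |a| ^ α) * (1 + |b| ^ α) ≤ 1 + |a| ^ α + |b| ^ α + 2 * |a * b| ^ α
      + |a| ^ (2 * α) + |b| ^ (2 * α) := by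
  rw [abs_mul, Real.mul_rpow (abs_nonneg a) (abs_nonneg b)]
  nlinarith [Real.rpow_nonneg (abs_nonneg a) α, Real.rpow_nonneg (abs_nonneg b) α,
    Real.rpow_nonneg (abs_nonneg a) (2 * α), Real.rpow_nonneg (abs_nonneg b) (2 * α)]

lemma norm_integral_mul_exp_I_mul_ofReal_le {X : Type*} [MeasurableSpace X] {μ : Measure X}
    {F : X → ℂ} (hF : Integrable F μ) (θ : X → ℝ) :
    ‖∫ x, F x * Complex.exp (Complex.I * θ x) ∂μ‖ ≤ ∫ x, ‖F x‖ ∂μ :=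
  norm_integral_le_of_norm_le hF.norm (ae_of_all _ fun x => by
    rw [norm_mul, mul_comm Complex.I, Complex.norm_exp_ofReal_mul_I, mul_one])

lemma integral_norm_le_sqrt_mul_sqrt_of_weight {X E : Type*} [MeasurableSpace X]
    [NormedAddCommGroup E] {μ : Measure X} {g : X → ℝ} {F : X → E}
    (hg : AEStronglyMeasurable g μ) (hg_pos : ∀ x, 0 < g x) (hF : AEStronglyMeasurable F μ)
    (hinv : Integrable (fun x => 1 / g x) μ) (hgF : Integrable (fun x => g x * ‖F x‖ ^ 2) μ) :
    ∫ x, ‖F x‖ ∂μ ≤ √(∫ x, 1 / g x ∂μ) * √(∫ x, g x * ‖F x‖ ^ 2 ∂μ) := by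
  have hsq : ∀ x, √(g x) ^ 2 = g x := fun x => Real.sq_sqrt (hg_pos x).le
  have hsqrt : AEStronglyMeasurable (fun x => √(g x)) μ :=
    Real.continuous_sqrt.comp_aestronglyMeasurable hg
  have hf : MemLp (fun x => 1 / √(g x)) (ENNReal.ofReal 2) μ := by
    rw [ENNReal.ofReal_ofNat]
    refine (memLp_two_iff_integrable_sq (aestronglyMeasurable_const.div₀ hsqrt)).2 ?_
    simpa only [Pi.div_apply, div_pow, one_pow, hsq] using hinv
  have hh : MemLp (fun x => √(g x) * ‖F x‖) (ENNReal.ofReal 2) μ := by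
    rw [ENNReal.ofReal_ofNat, memLp_two_iff_integrable_sq (by fun_prop)]
    simpa only [mul_pow, hsq] using hgF
  have hCS := integral_mul_le_Lp_mul_Lq_of_nonneg Real.HolderConjugate.two_two
    (ae_of_all _ fun x => by positivity) (ae_of_all _ fun x => by positivity) hf hh
  have hcancel : ∀ x, 1 / √(g x) * (√(g x) * ‖F x‖) = ‖F x‖ := fun x => by
    rw [one_div_mul_eq_div, mul_div_cancel_left₀ _ (Real.sqrt_pos.2 (hg_pos x)).ne']
  simp only [hcancel, Real.rpow_two, div_pow, one_pow, mul_pow, hsq] at hCS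
  simpa only [Real.sqrt_eq_rpow] using hCS

theorem discrete_fractional_sobolev_inequality_general
    (α hx hy : ℝ) (hα₁ : 1 < α)
    (R : Set (ℝ × ℝ))
    (w : ℝ × ℝ → ℝ)
    (hw : w = fun p => 1 + |p.1| ^ α + |p.2| ^ α + 2 * |p.1 * p.2| ^ α
            + |p.1| ^ (2 * α) + |p.2| ^ (2 * α))
    (F : ℝ × ℝ → ℂ)
    (hF : IntegrableOn F R)
    (hFw : IntegrableOn (fun p => w p * ‖F p‖ ^ 2) R)
    (V : ℤ → ℤ → ℂ)
    (hV : ∀ j k : ℤ, V j k = (1 / (2 * Real.pi) : ℂ) *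
            ∫ p in R, F p * Complex.exp (Complex.I * (p.1 * j * hx + p.2 * k * hy)))
    (Cα : ℝ)
    (hC : Cα = (1 / (2 * Real.pi)) *
            Real.sqrt (∫ p : ℝ × ℝ, 1 / ((1 + |p.1| ^ α) * (1 + |p.2| ^ α)))) :
    Integrable (fun p : ℝ × ℝ => 1 / ((1 + |p.1| ^ α) * (1 + |p.2| ^ α)))
      (volume : Measure (ℝ × ℝ)) ∧
    ∀ j k : ℤ, ‖V j k‖ ≤ Cα * Real.sqrt (∫ p in R, w p * ‖F p‖ ^ 2) := by
  set g : ℝ × ℝ → ℝ := fun p => (1 + |p.1| ^ α) * (1 + |p.2| ^ α)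
  have hg_pos : ∀ p, 0 < g p := fun p => by positivity
  have hg_meas : Measurable g := by fun_prop
  have hgw : ∀ p, g p ≤ w p := fun p => hw ▸ one_add_abs_rpow_mul_one_add_abs_rpow_le p.1 p.2 α
  have hinv : Integrable (fun p => 1 / g p) := integrable_one_div_mul_one_add_abs_rpow hα₁
  have hgF : IntegrableOn (fun p => g p * ‖F p‖ ^ 2) R :=
    hFw.mono' (hg_meas.aestronglyMeasurable.mul (hF.1.norm.pow 2)) (ae_of_all _ fun p => by
      rw [Real.norm_of_nonneg (by positivity)]; gcongr; exact hgw p)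
  refine ⟨hinv, fun j k => ?_⟩
  calc ‖V j k‖ ≤ 1 / (2 * Real.pi) * ∫ p in R, ‖F p‖ := by
        have hc : ‖(1 / (2 * Real.pi) : ℂ)‖ = 1 / (2 * Real.pi) := by
          simp [abs_of_pos Real.pi_pos]
        rw [hV, norm_mul, hc]
        gcongr
        simpa only [Complex.ofReal_add, Complex.ofReal_mul, Complex.ofReal_intCast] using
          norm_integral_mul_exp_I_mul_ofReal_le hF (fun p => p.1 * j * hx + p.2 * k * hy)
    _ ≤ 1 / (2 * Real.pi) * (√(∫ p in R, 1 / g p) * √(∫ p in R, g p * ‖F p‖ ^ 2)) := by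
        gcongr
        exact integral_norm_le_sqrt_mul_sqrt_of_weight
          hg_meas.aestronglyMeasurable hg_pos hF.1 hinv.integrableOn hgF
    _ ≤ 1 / (2 * Real.pi) * (√(∫ p, 1 / g p) * √(∫ p in R, w p * ‖F p‖ ^ 2)) := by
        gcongr _ * (√?_ * √?_)
        · exact setIntegral_le_integral hinv (ae_of_all _ fun p => by positivity)
        · exact integral_mono hgF hFw fun p => by gcongr; exact hgw p
    _ = Cα * √(∫ p in R, w p * ‖F p‖ ^ 2) := by rw [hC]; ring

/-- Discrete fractional Sobolev inequality. With `R = [−π/h_x, π/h_x] × [−π/h_y, π/h_y]`,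
`F` integrable on `R` together with its weighted square, and
`V_{j,k} = (1/(2π)) ∫_R F(k₁,k₂) e^{i(k₁ j h_x + k₂ k h_y)}`, one has
`|V_{j,k}| ≤ C_α (∫_R (1+|k₁|^α+|k₂|^α+2|k₁k₂|^α+|k₁|^{2α}+|k₂|^{2α}) |F|²)^{1/2}`,
where `C_α = (1/(2π)) (∫_{ℝ²} dk₁dk₂/((1+|k₁|^α)(1+|k₂|^α)))^{1/2}` is finite and
depends only on `α`. -/
theorem discrete_fractional_sobolev_inequality
    (α hx hy : ℝ) (hα₁ : 1 < α) (hα₂ : α ≤ 2) (hhx : 0 < hx) (hhy : 0 < hy)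
    (R : Set (ℝ × ℝ))
    (hR : R = Set.Icc (-(Real.pi / hx)) (Real.pi / hx) ×ˢ
              Set.Icc (-(Real.pi / hy)) (Real.pi / hy))
    (w : ℝ × ℝ → ℝ)
    (hw : w = fun p => 1 + |p.1| ^ α + |p.2| ^ α + 2 * |p.1 * p.2| ^ α
            + |p.1| ^ (2 * α) + |p.2| ^ (2 * α))
    (F : ℝ × ℝ → ℂ)
    (hF : IntegrableOn F R)
    (hFw : IntegrableOn (fun p => w p * ‖F p‖ ^ 2) R)
    (V : ℤ → ℤ → ℂ)
    (hV : ∀ j k : ℤ, V j k = (1 / (2 * Real.pi) : ℂ) *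
            ∫ p in R, F p * Complex.exp (Complex.I * (p.1 * j * hx + p.2 * k * hy)))
    (Cα : ℝ)
    (hC : Cα = (1 / (2 * Real.pi)) *
            Real.sqrt (∫ p : ℝ × ℝ, 1 / ((1 + |p.1| ^ α) * (1 + |p.2| ^ α)))) :
    Integrable (fun p : ℝ × ℝ => 1 / ((1 + |p.1| ^ α) * (1 + |p.2| ^ α)))
      (volume : Measure (ℝ × ℝ)) ∧
    ∀ j k : ℤ, ‖V j k‖ ≤ Cα * Real.sqrt (∫ p in R, w p * ‖F p‖ ^ 2) :=
  discrete_fractional_sobolev_inequality_general α hx hy hα₁ R w hw F hF hFw V hV Cα hC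
end

section
/- Let 1 < α ≤ 2, let h_x, h_y > 0, set R = [−π/h_x, π/h_x] × [−π/h_y, π/h_y], and let G : ℝ² → [0, ∞) be a measurable function. Then (2/π)^α ∫_R (|k₁|^α + |k₂|^α) G(k₁,k₂) dk₁dk₂ ≤ ∫_R (h_x^{−α}(2|sin(k₁h_x/2)|)^α + h_y^{−α}(2|sin(k₂h_y/2)|)^α) G(k₁,k₂) dk₁dk₂ ≤ ∫_R (|k₁|^α + |k₂|^α) G(k₁,k₂) dk₁dk₂ (as an inequality of extended-real-valued Lebesgue integrals). -/
open MeasureTheory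

lemma one_dim_symbol_bounds (α h k : ℝ) (hα : 0 ≤ α) (hh : 0 < h)
    (hk : |k| ≤ Real.pi / h) :
    (2 / Real.pi) ^ α * |k| ^ α ≤ h ^ (-α) * (2 * |Real.sin (k * h / 2)|) ^ α ∧
    h ^ (-α) * (2 * |Real.sin (k * h / 2)|) ^ α ≤ |k| ^ α := by
  have hπ : (0:ℝ) < Real.pi := Real.pi_pos
  set s := |Real.sin (k * h / 2)| with hs
  have hsnn : 0 ≤ s := abs_nonneg _
  have habs : |k * h / 2| = |k| * h / 2 := by
    rw [abs_div, abs_mul, abs_of_pos hh]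
    simp
  have hbound : |k * h / 2| ≤ Real.pi / 2 := by
    rw [habs]
    have : |k| * h ≤ Real.pi := by
      have := mul_le_mul_of_nonneg_right hk hh.le
      rwa [div_mul_cancel₀ _ hh.ne'] at this
    linarith
  have hjordan : 2 / Real.pi * |k * h / 2| ≤ s := Real.mul_abs_le_abs_sin hbound
  have hupper0 : s ≤ |k * h / 2| := Real.abs_sin_le_abs
  have hhinv : h ^ (-α) = (h⁻¹) ^ α := by
    rw [Real.rpow_neg hh.le, Real.inv_rpow hh.le]
  -- lower
  constructor
  · rw [hhinv, ← Real.mul_rpow (by positivity) (abs_nonneg _),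
      ← Real.mul_rpow (by positivity) (by positivity)]
    apply Real.rpow_le_rpow (by positivity) _ hα
    rw [habs] at hjordan
    rw [inv_mul_eq_div, le_div_iff₀ hh]
    nlinarith
  · rw [hhinv, ← Real.mul_rpow (by positivity) (by positivity)]
    apply Real.rpow_le_rpow (by positivity) _ hα
    rw [habs] at hupper0
    rw [inv_mul_eq_div, div_le_iff₀ hh]
    nlinarith [abs_nonneg k]

/-- Fourier-side fractional seminorm equivalence (order `α/2` version): for
`1 < α ≤ 2`, mesh sizes `h_x, h_y > 0`, `R = [−π/h_x, π/h_x] × [−π/h_y, π/h_y]`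
and any measurable `G : ℝ² → [0,∞)`,
`(2/π)^α ∫_R (|k₁|^α + |k₂|^α) G ≤ ∫_R (h_x^{−α}(2|sin(k₁h_x/2)|)^α + h_y^{−α}(2|sin(k₂h_y/2)|)^α) G
  ≤ ∫_R (|k₁|^α + |k₂|^α) G`,
as extended-real-valued Lebesgue integrals. -/
theorem symbol_seminorm_equivalence_half
    (α hx hy : ℝ) (hα₁ : 1 < α) (hα₂ : α ≤ 2) (hhx : 0 < hx) (hhy : 0 < hy)
    (R : Set (ℝ × ℝ))
    (hR : R = Set.Icc (-(Real.pi / hx)) (Real.pi / hx) ×ˢ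
              Set.Icc (-(Real.pi / hy)) (Real.pi / hy))
    (G : ℝ × ℝ → ℝ) (hGmeas : Measurable G) (hGpos : ∀ p, 0 ≤ G p) :
    (∫⁻ p in R, ENNReal.ofReal ((2 / Real.pi) ^ α * (|p.1| ^ α + |p.2| ^ α) * G p) ≤
      ∫⁻ p in R, ENNReal.ofReal
        ((hx ^ (-α) * (2 * |Real.sin (p.1 * hx / 2)|) ^ α
          + hy ^ (-α) * (2 * |Real.sin (p.2 * hy / 2)|) ^ α) * G p)) ∧
    (∫⁻ p in R, ENNReal.ofReal
        ((hx ^ (-α) * (2 * |Real.sin (p.1 * hx / 2)|) ^ α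
          + hy ^ (-α) * (2 * |Real.sin (p.2 * hy / 2)|) ^ α) * G p) ≤
      ∫⁻ p in R, ENNReal.ofReal ((|p.1| ^ α + |p.2| ^ α) * G p)) := by
  have hα : (0:ℝ) ≤ α := by linarith
  have hRmeas : MeasurableSet R := by
    rw [hR]; exact (measurableSet_Icc.prod measurableSet_Icc)
  have hmem : ∀ p ∈ R, |p.1| ≤ Real.pi / hx ∧ |p.2| ≤ Real.pi / hy := by
    intro p hp
    rw [hR] at hp
    exact ⟨abs_le.2 ⟨hp.1.1, hp.1.2⟩, abs_le.2 ⟨hp.2.1, hp.2.2⟩⟩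
  constructor
  · apply setLIntegral_mono' hRmeas
    intro p hp
    apply ENNReal.ofReal_le_ofReal
    obtain ⟨h1, h2⟩ := hmem p hp
    have l1 := (one_dim_symbol_bounds α hx p.1 hα hhx h1).1
    have l2 := (one_dim_symbol_bounds α hy p.2 hα hhy h2).1
    have := hGpos p
    nlinarith
  · apply setLIntegral_mono' hRmeas
    intro p hp
    apply ENNReal.ofReal_le_ofReal
    obtain ⟨h1, h2⟩ := hmem p hp
    have l1 := (one_dim_symbol_bounds α hx p.1 hα hhx h1).2
    have l2 := (one_dim_symbol_bounds α hy p.2 hα hhy h2).2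
    have := hGpos p
    nlinarith
end

section
/- Let 1 < α ≤ 2, let h_x, h_y > 0, set R = [−π/h_x, π/h_x] × [−π/h_y, π/h_y], and let G : ℝ² → [0, ∞) be a measurable function. Then (2/π)^{2α} ∫_R (|k₁|^α + |k₂|^α)² G(k₁,k₂) dk₁dk₂ ≤ ∫_R (h_x^{−α}(2|sin(k₁h_x/2)|)^α + h_y^{−α}(2|sin(k₂h_y/2)|)^α)² G(k₁,k₂) dk₁dk₂ ≤ ∫_R (|k₁|^α + |k₂|^α)² G(k₁,k₂) dk₁dk₂ (as an inequality of extended-real-valued Lebesgue integrals). -/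
open MeasureTheory Real

lemma one_dim_bounds (α h k : ℝ) (hα : 0 < α) (hh : 0 < h)
    (hk : |k| ≤ π / h) :
    (2 / π) ^ α * |k| ^ α ≤ h ^ (-α) * (2 * |Real.sin (k * h / 2)|) ^ α ∧
      h ^ (-α) * (2 * |Real.sin (k * h / 2)|) ^ α ≤ |k| ^ α := by
  have hπ := Real.pi_pos
  set t := |k| * h / 2 with ht
  have ht0 : 0 ≤ t := by positivity
  have ht2 : t ≤ π / 2 := by
    have : |k| * h ≤ π := by
      calc |k| * h ≤ (π / h) * h := by nlinarith
        _ = π := by field_simp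
    rw [ht]; linarith
  have hsin0 : 0 ≤ Real.sin t :=
    Real.sin_nonneg_of_nonneg_of_le_pi ht0 (by linarith)
  have habs : |Real.sin (k * h / 2)| = Real.sin t := by
    have h1 : |k * h / 2| = t := by
      rw [ht, abs_div, abs_mul, abs_of_pos hh]; norm_num
    have h2 : |Real.sin (k * h / 2)| = |Real.sin (|k * h / 2|)| := by
      rcases abs_choice (k * h / 2) with hc | hc
      · rw [hc]
      · rw [hc, Real.sin_neg, abs_neg]
    rw [h2, h1, abs_of_nonneg hsin0]
  have hinv : h ^ (-α) * h ^ α = 1 := by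
    rw [← Real.rpow_add hh]; simp
  constructor
  · have hj : 2 / π * t ≤ Real.sin t := Real.mul_le_sin ht0 ht2
    have h1 : (2 / π) * (|k| * h) ≤ 2 * Real.sin t := by
      rw [ht] at hj ⊢; nlinarith
    have h2 : ((2 / π) * (|k| * h)) ^ α ≤ (2 * Real.sin t) ^ α :=
      Real.rpow_le_rpow (by positivity) h1 hα.le
    rw [Real.mul_rpow (by positivity) (by positivity),
      Real.mul_rpow (abs_nonneg k) hh.le] at h2
    rw [habs]
    calc (2 / π) ^ α * |k| ^ α
        = (2 / π) ^ α * (|k| ^ α * (h ^ (-α) * h ^ α)) := by rw [hinv, mul_one]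
      _ = h ^ (-α) * ((2 / π) ^ α * (|k| ^ α * h ^ α)) := by ring
      _ ≤ h ^ (-α) * (2 * Real.sin t) ^ α := by
          exact mul_le_mul_of_nonneg_left h2 (Real.rpow_nonneg hh.le _)
  · have hj : Real.sin t ≤ t := Real.sin_le ht0
    have h1 : 2 * Real.sin t ≤ |k| * h := by rw [ht] at hj ⊢; nlinarith
    have h2 : (2 * Real.sin t) ^ α ≤ (|k| * h) ^ α :=
      Real.rpow_le_rpow (by positivity) h1 hα.le
    rw [Real.mul_rpow (abs_nonneg k) hh.le] at h2
    rw [habs]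
    calc h ^ (-α) * (2 * Real.sin t) ^ α
        ≤ h ^ (-α) * (|k| ^ α * h ^ α) :=
          mul_le_mul_of_nonneg_left h2 (Real.rpow_nonneg hh.le _)
      _ = |k| ^ α * (h ^ (-α) * h ^ α) := by ring
      _ = |k| ^ α := by rw [hinv, mul_one]

/-- Fourier-side fractional seminorm equivalence (order `α` version): for
`1 < α ≤ 2`, mesh sizes `h_x, h_y > 0`, `R = [−π/h_x, π/h_x] × [−π/h_y, π/h_y]`
and any measurable `G : ℝ² → [0,∞)`,
`(2/π)^{2α} ∫_R (|k₁|^α + |k₂|^α)² G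
  ≤ ∫_R (h_x^{−α}(2|sin(k₁h_x/2)|)^α + h_y^{−α}(2|sin(k₂h_y/2)|)^α)² G
  ≤ ∫_R (|k₁|^α + |k₂|^α)² G`,
as extended-real-valued Lebesgue integrals. -/
theorem symbol_seminorm_equivalence_full
    (α hx hy : ℝ) (hα₁ : 1 < α) (hα₂ : α ≤ 2) (hhx : 0 < hx) (hhy : 0 < hy)
    (R : Set (ℝ × ℝ))
    (hR : R = Set.Icc (-(Real.pi / hx)) (Real.pi / hx) ×ˢ
              Set.Icc (-(Real.pi / hy)) (Real.pi / hy))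
    (G : ℝ × ℝ → ℝ) (hGmeas : Measurable G) (hGpos : ∀ p, 0 ≤ G p) :
    (∫⁻ p in R, ENNReal.ofReal
        ((2 / Real.pi) ^ (2 * α) * (|p.1| ^ α + |p.2| ^ α) ^ 2 * G p) ≤
      ∫⁻ p in R, ENNReal.ofReal
        ((hx ^ (-α) * (2 * |Real.sin (p.1 * hx / 2)|) ^ α
          + hy ^ (-α) * (2 * |Real.sin (p.2 * hy / 2)|) ^ α) ^ 2 * G p)) ∧
    (∫⁻ p in R, ENNReal.ofReal
        ((hx ^ (-α) * (2 * |Real.sin (p.1 * hx / 2)|) ^ α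
          + hy ^ (-α) * (2 * |Real.sin (p.2 * hy / 2)|) ^ α) ^ 2 * G p) ≤
      ∫⁻ p in R, ENNReal.ofReal ((|p.1| ^ α + |p.2| ^ α) ^ 2 * G p)) := by
  have hπ := Real.pi_pos
  have hα0 : 0 < α := by linarith
  have hRmeas : MeasurableSet R := by
    rw [hR]; exact measurableSet_Icc.prod measurableSet_Icc
  have hmem : ∀ p ∈ R, |p.1| ≤ π / hx ∧ |p.2| ≤ π / hy := by
    intro p hp
    rw [hR, Set.mem_prod, Set.mem_Icc, Set.mem_Icc] at hp
    exact ⟨abs_le.2 ⟨hp.1.1, hp.1.2⟩, abs_le.2 ⟨hp.2.1, hp.2.2⟩⟩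
  set S : ℝ × ℝ → ℝ := fun p =>
    hx ^ (-α) * (2 * |Real.sin (p.1 * hx / 2)|) ^ α
      + hy ^ (-α) * (2 * |Real.sin (p.2 * hy / 2)|) ^ α with hS
  have hSnn : ∀ p, 0 ≤ S p := by
    intro p
    have h1 := Real.rpow_nonneg (le_of_lt hhx) (-α)
    have h2 := Real.rpow_nonneg (le_of_lt hhy) (-α)
    have h3 := Real.rpow_nonneg (by positivity : (0:ℝ) ≤ 2 * |Real.sin (p.1 * hx / 2)|) α
    have h4 := Real.rpow_nonneg (by positivity : (0:ℝ) ≤ 2 * |Real.sin (p.2 * hy / 2)|) α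
    rw [hS]; positivity
  have hKnn : ∀ p : ℝ × ℝ, 0 ≤ |p.1| ^ α + |p.2| ^ α := by
    intro p
    have h1 := Real.rpow_nonneg (abs_nonneg p.1) α
    have h2 := Real.rpow_nonneg (abs_nonneg p.2) α
    linarith
  have hlow : ∀ p ∈ R, (2 / π) ^ α * (|p.1| ^ α + |p.2| ^ α) ≤ S p := by
    intro p hp
    obtain ⟨h1, h2⟩ := hmem p hp
    have b1 := (one_dim_bounds α hx p.1 hα0 hhx h1).1
    have b2 := (one_dim_bounds α hy p.2 hα0 hhy h2).1
    rw [hS]; simp only [mul_add]; exact add_le_add b1 b2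
  have hup : ∀ p ∈ R, S p ≤ |p.1| ^ α + |p.2| ^ α := by
    intro p hp
    obtain ⟨h1, h2⟩ := hmem p hp
    exact add_le_add (one_dim_bounds α hx p.1 hα0 hhx h1).2
      (one_dim_bounds α hy p.2 hα0 hhy h2).2
  have hcsq : (2 / π) ^ (2 * α) = ((2 / π) ^ α) ^ 2 := by
    rw [mul_comm, Real.rpow_mul (by positivity), Real.rpow_two]
  refine ⟨?_, ?_⟩
  · apply setLIntegral_mono' hRmeas
    intro p hp
    apply ENNReal.ofReal_le_ofReal
    have hle := hlow p hp
    have hc : 0 ≤ (2 / π) ^ α * (|p.1| ^ α + |p.2| ^ α) := by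
      have := hKnn p
      have := Real.rpow_nonneg (by positivity : (0:ℝ) ≤ 2 / π) α
      positivity
    have hsq : ((2 / π) ^ α * (|p.1| ^ α + |p.2| ^ α)) ^ 2 ≤ (S p) ^ 2 :=
      pow_le_pow_left₀ hc hle 2
    rw [hcsq]
    calc ((2 / π) ^ α) ^ 2 * (|p.1| ^ α + |p.2| ^ α) ^ 2 * G p
        = ((2 / π) ^ α * (|p.1| ^ α + |p.2| ^ α)) ^ 2 * G p := by ring
      _ ≤ (S p) ^ 2 * G p := mul_le_mul_of_nonneg_right hsq (hGpos p)
  · apply setLIntegral_mono' hRmeas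
    intro p hp
    apply ENNReal.ofReal_le_ofReal
    have hsq : (S p) ^ 2 ≤ (|p.1| ^ α + |p.2| ^ α) ^ 2 :=
      pow_le_pow_left₀ (hSnn p) (hup p hp) 2
    exact mul_le_mul_of_nonneg_right hsq (hGpos p)
end

section
/- (Discrete energy conservation.) Let τ > 0, h_x > 0, h_y > 0, let m, N ≥ 1, let L be a real m×m matrix and D = Lᵀ L (acting on ℂ^m through the entrywise embedding ℝ ↪ ℂ). Suppose U⁰, U¹, …, U^N ∈ ℂ^m satisfy, for every 1 ≤ n ≤ N−1 and every component 1 ≤ j ≤ m, the three-level scheme i (U^{n+1}_j − U^{n−1}_j)/(2τ) − (D((U^{n+1} + U^{n−1})/2))_j + |U^n_j|² (U^{n+1}_j + U^{n−1}_j)/2 = 0. Define, for 0 ≤ n ≤ N−1, E^n = (1/2) h_x h_y (‖L U^{n+1}‖² + ‖L U^n‖²) − (1/2) h_x h_y ∑_{j=1}^m |U^n_j|² |U^{n+1}_j|², where ‖x‖² = ∑_j |x_j|². Then E^n = E^0 for all 0 ≤ n ≤ N−1. -/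
/-!
Pair the scheme at level `n` with `U^{n+1} - U^{n-1}` and take real parts. The time-difference
term contributes `i ‖U^{n+1} - U^{n-1}‖² / (2τ)`, which is purely imaginary; since `D = Lᵀ L`, the
`D`-term contributes `(‖L U^{n+1}‖² - ‖L U^{n-1}‖²) / 2`; and the cubic term contributes
`∑ⱼ |U^n_j|² (|U^{n+1}_j|² - |U^{n-1}_j|²) / 2`. This is exactly `E^n = E^{n-1}`.
-/

open Matrix ComplexConjugate

namespace Complex

lemma re_conj_sub_mul_add (x y : ℂ) : (conj (x - y) * (x + y)).re = ‖x‖ ^ 2 - ‖y‖ ^ 2 := by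
  simp only [mul_re, conj_re, conj_im, sub_re, sub_im, add_re, add_im,
    Complex.sq_norm, normSq_apply]
  ring

lemma re_conj_mul_I_mul_div_ofReal (z : ℂ) (τ : ℝ) : (conj z * (I * z / τ)).re = 0 := by
  rw [mul_div_assoc, mul_left_comm, ← mul_div_assoc, conj_mul', ← ofReal_pow, ← ofReal_div,
    I_mul_re, ofReal_im, neg_zero]

end Complex

section

variable {ι κ : Type*}

lemma re_star_sub_dotProduct_add [Fintype ι] (v w : ι → ℂ) :
    (star (v - w) ⬝ᵥ (v + w)).re = ∑ j, ‖v j‖ ^ 2 - ∑ j, ‖w j‖ ^ 2 := by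
  simp only [dotProduct, Complex.re_sum, Pi.star_apply, Pi.sub_apply, Pi.add_apply,
    Complex.star_def, Complex.re_conj_sub_mul_add, Finset.sum_sub_distrib]

lemma Matrix.star_dotProduct_conjTranspose_mul_self_mulVec [Fintype ι] [Fintype κ] {R : Type*}
    [CommSemiring R] [StarRing R] (A : Matrix κ ι R) (v w : ι → R) :
    star w ⬝ᵥ ((Aᴴ * A) *ᵥ v) = star (A *ᵥ w) ⬝ᵥ (A *ᵥ v) := by
  rw [← mulVec_mulVec, dotProduct_mulVec, star_mulVec]

lemma Matrix.map_ofReal_transpose_mul_self [Fintype κ] (L : Matrix κ ι ℝ) :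
    (Lᵀ * L).map Complex.ofReal = (L.map Complex.ofReal)ᴴ * L.map Complex.ofReal := by
  rw [← conjTranspose_eq_transpose_of_trivial,
    ← conjTranspose_map _ fun x => (Complex.conj_ofReal x).symm]
  exact Matrix.map_mul (f := Complex.ofRealHom)

open Complex in
theorem sum_norm_sq_mulVec_sub_eq_of_scheme [Fintype ι] [Fintype κ] (A : Matrix κ ι ℂ) (τ : ℝ)
    (u a b : ι → ℂ)
    (hscheme : ∀ j, I * (a j - b j) / (2 * (τ : ℂ)) -
      ((Aᴴ * A) *ᵥ fun i => (a i + b i) / 2) j + (‖u j‖ : ℂ) ^ 2 * (a j + b j) / 2 = 0) :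
    ∑ k, ‖(A *ᵥ a) k‖ ^ 2 - ∑ k, ‖(A *ᵥ b) k‖ ^ 2 = ∑ j, ‖u j‖ ^ 2 * (‖a j‖ ^ 2 - ‖b j‖ ^ 2) := by
  have hmid : (fun i => (a i + b i) / 2) = (1 / 2 : ℂ) • (a + b) := by
    ext i; simp only [Pi.smul_apply, Pi.add_apply, smul_eq_mul]; ring
  have hD : ∀ j,
      ((Aᴴ * A) *ᵥ (a + b)) j = I * (a j - b j) / τ + (‖u j‖ : ℂ) ^ 2 * (a j + b j) := by
    intro j
    have h := hscheme j
    rw [hmid, mulVec_smul, Pi.smul_apply, smul_eq_mul] at h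
    linear_combination (-2 : ℂ) * h
  calc ∑ k, ‖(A *ᵥ a) k‖ ^ 2 - ∑ k, ‖(A *ᵥ b) k‖ ^ 2
      = (star (A *ᵥ a - A *ᵥ b) ⬝ᵥ (A *ᵥ a + A *ᵥ b)).re := (re_star_sub_dotProduct_add _ _).symm
    _ = (star (a - b) ⬝ᵥ ((Aᴴ * A) *ᵥ (a + b))).re := by
      rw [Matrix.star_dotProduct_conjTranspose_mul_self_mulVec, mulVec_sub, mulVec_add]
    _ = ∑ j, (conj (a j - b j) * (I * (a j - b j) / τ + (‖u j‖ ^ 2 : ℝ) * (a j + b j))).re := by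
      simp only [dotProduct, re_sum, hD, Pi.star_apply, Pi.sub_apply, star_def, ofReal_pow]
    _ = ∑ j, ‖u j‖ ^ 2 * (‖a j‖ ^ 2 - ‖b j‖ ^ 2) := by
      refine Finset.sum_congr rfl fun j _ => ?_
      rw [mul_add, add_re, re_conj_mul_I_mul_div_ofReal, zero_add, mul_left_comm, re_ofReal_mul,
        re_conj_sub_mul_add]

end

theorem discrete_energy_conservation_general
    (τ hx hy : ℝ)
    (m N : ℕ)
    (L : Matrix (Fin m) (Fin m) ℝ)
    (U : ℕ → Fin m → ℂ)
    (hscheme : ∀ n : ℕ, 1 ≤ n → n ≤ N - 1 → ∀ j : Fin m,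
      Complex.I * (U (n + 1) j - U (n - 1) j) / (2 * (τ : ℂ)) -
        ((Lᵀ * L).map (Complex.ofReal) *ᵥ fun i => (U (n + 1) i + U (n - 1) i) / 2) j +
        (‖U n j‖ : ℂ) ^ 2 * (U (n + 1) j + U (n - 1) j) / 2 = 0)
    (E : ℕ → ℝ)
    (hE : ∀ n : ℕ, E n =
      1 / 2 * (hx * hy) *
          ((∑ j, ‖(L.map (Complex.ofReal) *ᵥ U (n + 1)) j‖ ^ 2) +
            ∑ j, ‖(L.map (Complex.ofReal) *ᵥ U n) j‖ ^ 2) -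
        1 / 2 * (hx * hy) * ∑ j, ‖U n j‖ ^ 2 * ‖U (n + 1) j‖ ^ 2) :
    ∀ n : ℕ, n ≤ N - 1 → E n = E 0 := by
  have step : ∀ n, n + 1 ≤ N - 1 → E (n + 1) = E n := by
    intro n hn
    have key := sum_norm_sq_mulVec_sub_eq_of_scheme (L.map Complex.ofReal) τ (U (n + 1))
      (U (n + 2)) (U n)
      (by simpa [Matrix.map_ofReal_transpose_mul_self] using hscheme (n + 1) (by omega) hn)
    have hcomm : ∑ j, ‖U n j‖ ^ 2 * ‖U (n + 1) j‖ ^ 2 = ∑ j, ‖U (n + 1) j‖ ^ 2 * ‖U n j‖ ^ 2 :=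
      Finset.sum_congr rfl fun j _ => mul_comm _ _
    simp only [mul_sub, Finset.sum_sub_distrib] at key
    rw [hE, hE, hcomm]
    linear_combination 1 / 2 * (hx * hy) * key
  intro n hn
  induction n with
  | zero => rfl
  | succ n ih => rw [step n hn, ih (by omega)]

/-- Discrete energy conservation for the linearized three-level scheme
`i δ_t U^n − D U^{n̄} + |U^n|² U^{n̄} = 0` with `D = Lᵀ L`:
the discrete energy
`E^n = (h_x h_y/2)(‖L U^{n+1}‖² + ‖L U^n‖²) − (h_x h_y/2) ∑_j |U^n_j|²|U^{n+1}_j|²`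
satisfies `E^n = E^0` for all `0 ≤ n ≤ N−1`. -/
theorem discrete_energy_conservation
    (τ hx hy : ℝ) (hτ : 0 < τ) (hhx : 0 < hx) (hhy : 0 < hy)
    (m N : ℕ) (hm : 1 ≤ m) (hN : 1 ≤ N)
    (L : Matrix (Fin m) (Fin m) ℝ)
    (U : ℕ → Fin m → ℂ)
    (hscheme : ∀ n : ℕ, 1 ≤ n → n ≤ N - 1 → ∀ j : Fin m,
      Complex.I * (U (n + 1) j - U (n - 1) j) / (2 * (τ : ℂ)) -
        ((Lᵀ * L).map (Complex.ofReal) *ᵥ fun i => (U (n + 1) i + U (n - 1) i) / 2) j +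
        (‖U n j‖ : ℂ) ^ 2 * (U (n + 1) j + U (n - 1) j) / 2 = 0)
    (E : ℕ → ℝ)
    (hE : ∀ n : ℕ, E n =
      1 / 2 * (hx * hy) *
          ((∑ j, ‖(L.map (Complex.ofReal) *ᵥ U (n + 1)) j‖ ^ 2) +
            ∑ j, ‖(L.map (Complex.ofReal) *ᵥ U n) j‖ ^ 2) -
        1 / 2 * (hx * hy) * ∑ j, ‖U n j‖ ^ 2 * ‖U (n + 1) j‖ ^ 2) :
    ∀ n : ℕ, n ≤ N - 1 → E n = E 0 :=
  discrete_energy_conservation_general τ hx hy m N L U hscheme E hE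
end

section
/- (Discrete mass conservation.) Let τ > 0, m ≥ 1, let D be a real symmetric m×m matrix (acting on ℂ^m through the entrywise embedding ℝ ↪ ℂ), and let a, b, c ∈ ℂ^m satisfy, for every component 1 ≤ j ≤ m, i (a_j − c_j)/(2τ) − (D((a + c)/2))_j + |b_j|² (a_j + c_j)/2 = 0. Then ∑_{j=1}^m |a_j|² = ∑_{j=1}^m |c_j|². -/
/-!
Multiplying the scheme by `2τ` gives `i (a - c) = A (a + c)` with `A = τ (D - diag |b|²)` real
symmetric, hence Hermitian over `ℂ`. Pairing with `a + c`, the right-hand side `⟨a + c, A (a + c)⟩`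
is real, so the real part of `⟨a + c, a - c⟩`, which is `‖a‖² - ‖c‖²`, vanishes.
-/

open Matrix ComplexConjugate

lemma RCLike.re_conj_add_mul_sub {𝕜 : Type*} [RCLike 𝕜] (z w : 𝕜) :
    RCLike.re (conj (z + w) * (z - w)) = ‖z‖ ^ 2 - ‖w‖ ^ 2 := by
  simp only [map_add, map_sub, RCLike.mul_re, RCLike.conj_re, RCLike.conj_im,
    RCLike.norm_sq_eq_def]
  ring

lemma Matrix.re_star_add_dotProduct_sub {𝕜 n : Type*} [RCLike 𝕜] [Fintype n] (z w : n → 𝕜) :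
    RCLike.re (star (z + w) ⬝ᵥ (z - w)) = ∑ j, ‖z j‖ ^ 2 - ∑ j, ‖w j‖ ^ 2 := by
  simp only [dotProduct, map_sum, Pi.star_apply, Pi.add_apply, Pi.sub_apply, RCLike.star_def,
    RCLike.re_conj_add_mul_sub, Finset.sum_sub_distrib]

lemma Matrix.IsSymm.isHermitian_map_ofReal {n : Type*} {A : Matrix n n ℝ} (hA : A.IsSymm) :
    (A.map Complex.ofReal).IsHermitian :=
  (isHermitian_iff_isSymm.mpr hA).map _ fun x => (Complex.conj_ofReal x).symm

lemma Matrix.IsHermitian.re_star_dotProduct_eq_zero {n : Type*} [Fintype n] {A : Matrix n n ℂ}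
    (hA : A.IsHermitian) {u v : n → ℂ} (h : Complex.I • v = A *ᵥ u) :
    (star u ⬝ᵥ v).re = 0 := by
  simpa [← h, dotProduct_smul] using hA.im_star_dotProduct_mulVec_self u

theorem discrete_mass_conservation_general
    (τ : ℝ) (hτ : 0 < τ) (m : ℕ)
    (D : Matrix (Fin m) (Fin m) ℝ) (hD : D.IsSymm)
    (a b c : Fin m → ℂ)
    (hstep : ∀ j : Fin m,
      Complex.I * (a j - c j) / (2 * (τ : ℂ)) -
        (D.map (Complex.ofReal) *ᵥ fun i => (a i + c i) / 2) j +
        (‖b j‖ : ℂ) ^ 2 * (a j + c j) / 2 = 0) :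
    (∑ j, ‖a j‖ ^ 2) = ∑ j, ‖c j‖ ^ 2 := by
  set A : Matrix (Fin m) (Fin m) ℝ := τ • (D - diagonal fun j => ‖b j‖ ^ 2)
  have hA : (A.map Complex.ofReal).IsHermitian :=
    ((hD.sub (isSymm_diagonal _)).smul τ).isHermitian_map_ofReal
  have hhalf : (fun i => (a i + c i) / 2) = (2⁻¹ : ℂ) • (a + c) := by
    ext i
    simp [div_eq_inv_mul]
  have hτ₀ : (τ : ℂ) ≠ 0 := by exact_mod_cast hτ.ne'
  have hscheme : Complex.I • (a - c) = A.map Complex.ofReal *ᵥ (a + c) := by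
    ext j
    have hj := hstep j
    rw [hhalf, mulVec_smul] at hj
    simp only [A, Pi.smul_apply, smul_eq_mul, Pi.sub_apply, Pi.add_apply, Complex.ofReal_mul,
      Complex.real_smul, implies_true, Matrix.map_smul, Complex.ofReal_sub, Matrix.map_sub,
      Complex.ofReal_zero, diagonal_map, Complex.ofReal_pow, smul_mulVec, sub_mulVec,
      mulVec_diagonal] at hj ⊢
    field_simp at hj
    linear_combination hj
  have hre := hA.re_star_dotProduct_eq_zero hscheme
  rw [← RCLike.re_to_complex, re_star_add_dotProduct_sub] at hre
  linarith

/-- Discrete mass conservation: if `a, b, c ∈ ℂ^m` satisfy the linearized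
three-level step `i (a_j − c_j)/(2τ) − (D((a+c)/2))_j + |b_j|²(a_j+c_j)/2 = 0`
with `D` real symmetric, then `∑_j |a_j|² = ∑_j |c_j|²`. -/
theorem discrete_mass_conservation
    (τ : ℝ) (hτ : 0 < τ) (m : ℕ) (hm : 1 ≤ m)
    (D : Matrix (Fin m) (Fin m) ℝ) (hD : D.IsSymm)
    (a b c : Fin m → ℂ)
    (hstep : ∀ j : Fin m,
      Complex.I * (a j - c j) / (2 * (τ : ℂ)) -
        (D.map (Complex.ofReal) *ᵥ fun i => (a i + c i) / 2) j +
        (‖b j‖ : ℂ) ^ 2 * (a j + c j) / 2 = 0) :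
    (∑ j, ‖a j‖ ^ 2) = ∑ j, ‖c j‖ ^ 2 :=
  discrete_mass_conservation_general τ hτ m D hD a b c hstep
end
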